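/- arXiv:2602.09417 — 6 statements merged into one kernel-verified Lean document; each statement's English description precedes it below -/
import Mathlib

section
/- The quantity L satisfies L = (1/D) · Σ_{k=0}^{S} a_{kD} · N^{T−k}. -/
/-!
Write `K = k + D` and pair polynomials with `L` through `φ p = ∑_{t=1}^{K} p_t L_t`. Since
`(X + 1)^K - (X + 1)^k = X g` with `g = (X + 1)^k q` and `q = ∑_{i<D} (X + 1)^i`, the left-hand
side is `(N / D) φ (X g)`. With `u = (X + 1)^D - N`, the recurrence says that `φ` kills `X^j u`
for `1 ≤ j ≤ k`, and the boundary values say that `φ (X^(k+1) s) = (N - 1)^k s_{D-1}` when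
`deg s < D`. Writing `g ≡ X^k s (mod u)` and using `X q ≡ N - 1 (mod u)`, `φ (X g)` is the
coefficient of `X^(D-1)` in the remainder of `q^k g = (X + 1)^k q^(k+1)` modulo `u`.

Because `1 + Y + ⋯ + Y^(D-1)` is palindromic, `Y^k (1 + ⋯ + Y^(D-1))^T = ∑ a_n Y^(TD-1-n)`.
Substituting `Y = X + 1` and reducing with `(X + 1)^D ≡ N`, the power `(X + 1)^(TD-1-n)`
contributes to the coefficient of `X^(D-1)` only when `D ∣ n`, and then contributes `N^(T-1-n/D)`.
-/

open Finset Polynomial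

namespace Polynomial

section CommSemiring

variable {R : Type*} [CommSemiring R]

theorem reflect_pow (f : R[X]) {N : ℕ} (hf : f.natDegree ≤ N) (n : ℕ) :
    reflect (N * n) (f ^ n) = reflect N f ^ n := by
  induction n with
  | zero => simp
  | succ n ih =>
    rw [pow_succ, pow_succ, Nat.mul_succ,
      reflect_mul _ _ (natDegree_pow_le.trans (by rw [mul_comm]; gcongr)) hf, ih]

theorem reflect_geom_sum_X (D : ℕ) :
    reflect (D - 1) (∑ i ∈ range D, (X : R[X]) ^ i) = ∑ i ∈ range D, X ^ i := by
  ext i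
  simp only [coeff_reflect, finsetSum_coeff, coeff_X_pow, sum_ite_eq, mem_range]
  rcases le_or_gt i (D - 1) with hi | hi
  · simp only [revAt_le hi, show D - 1 - i < D ↔ i < D by omega]
  · rw [revAt_eq_self_of_lt hi]

theorem natDegree_geom_sum_le {p : R[X]} (hp : p.natDegree ≤ 1) (D : ℕ) :
    (∑ i ∈ range D, p ^ i).natDegree ≤ D - 1 :=
  natDegree_sum_le_of_forall_le _ _ fun i hi =>
    natDegree_pow_le.trans ((Nat.mul_le_mul_left i hp).trans
      (by rw [mul_one]; exact Nat.le_sub_one_of_lt (mem_range.1 hi)))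

theorem natDegree_geom_sum_pow_le {p : R[X]} (hp : p.natDegree ≤ 1) (D n : ℕ) :
    ((∑ i ∈ range D, p ^ i) ^ n).natDegree ≤ n * (D - 1) :=
  natDegree_pow_le.trans (Nat.mul_le_mul_left _ (natDegree_geom_sum_le hp D))

theorem natDegree_X_add_one_pow_mul_geom_sum_lt {D : ℕ} (hD : 0 < D) (k : ℕ) :
    ((X + 1 : R[X]) ^ k * ∑ i ∈ range D, (X + 1) ^ i).natDegree < k + D :=
  natDegree_mul_le.trans_lt <| by
    grw [natDegree_geom_sum_le (by compute_degree) D,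
      (by compute_degree : ((X + 1 : R[X]) ^ k).natDegree ≤ k)]
    omega

theorem X_pow_mul_geom_sum_pow_eq_reflect {D : ℕ} (hD : 0 < D) (k : ℕ) :
    (X : R[X]) ^ k * (∑ i ∈ range D, X ^ i) ^ (k + 1)
      = reflect ((k + 1) * D - 1) ((∑ i ∈ range D, X ^ i) ^ (k + 1)) := by
  have hQ := natDegree_geom_sum_le (p := (X : R[X])) natDegree_X_le D
  have hexp : (k + 1) * D - 1 = (D - 1) * (k + 1) + k := by
    obtain ⟨d, rfl⟩ : ∃ d, D = d + 1 := ⟨D - 1, by omega⟩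
    rw [Nat.add_sub_cancel, show (k + 1) * (d + 1) = d * (k + 1) + k + 1 by ring]
    omega
  rw [hexp, ← mul_one ((∑ i ∈ range D, X ^ i) ^ (k + 1)),
    reflect_mul _ _ ((natDegree_geom_sum_pow_le natDegree_X_le D (k + 1)).trans_eq (mul_comm _ _))
      (by simp),
    reflect_pow _ hQ, reflect_geom_sum_X]
  simp [mul_comm]

theorem aeval_reflect {S : Type*} [CommSemiring S] [Algebra R S] (x : S) {N : ℕ} {f : R[X]}
    (hf : f.natDegree ≤ N) :
    aeval x (reflect N f) = ∑ n ∈ range (N + 1), f.coeff n • x ^ (N - n) := by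
  rw [aeval_eq_sum_range' (natDegree_reflect_le.trans_lt (Nat.lt_succ_of_le (max_le le_rfl hf))),
    ← sum_range_reflect]
  refine sum_congr rfl fun n hn => ?_
  rw [mem_range] at hn
  rw [coeff_reflect, revAt_le (by omega), Nat.succ_sub_one, Nat.sub_sub_self (by omega)]

end CommSemiring

section CommRing

variable {R : Type*} [CommRing R]

theorem X_mul_geom_sum_X_add_one (D : ℕ) :
    (X : R[X]) * ∑ i ∈ range D, (X + 1) ^ i = (X + 1) ^ D - 1 := by
  rw [← mul_geom_sum, add_sub_cancel_right]

theorem sum_range_coeff_mul_eq_of_natDegree_le {p : R[X]} {M D T : ℕ} (hD : 0 < D)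
    (hp : p.natDegree ≤ M) (hT : M / D < T) (f : ℕ → R) :
    ∑ j ∈ range T, p.coeff (j * D) * f j
      = ∑ j ∈ range (M / D + 1), p.coeff (j * D) * f j := by
  refine (sum_subset (range_subset_range.2 hT) fun j _ hj => ?_).symm
  rw [coeff_eq_zero_of_natDegree_lt, zero_mul]
  exact hp.trans_lt ((Nat.div_lt_iff_lt_mul hD).1 (by simpa using hj))

end CommRing

end Polynomial

theorem Finset.sum_range_mul_ite_dvd {M : Type*} [AddCommMonoid M] {D : ℕ} (hD : 0 < D)
    (f : ℕ → M) (T : ℕ) :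
    ∑ n ∈ range (T * D), (if D ∣ n then f n else 0) = ∑ j ∈ range T, f (j * D) := by
  induction T with
  | zero => simp
  | succ T ih =>
    rw [add_one_mul, sum_range_add, ih, sum_range_succ]
    congr 1
    rw [sum_eq_single 0]
    · simp
    · intro r hr hr0
      have hndvd : ¬D ∣ T * D + r := by
        rw [Nat.dvd_add_right (dvd_mul_left D T)]
        exact fun h => hr0 (Nat.eq_zero_of_dvd_of_lt h (by simpa using hr))
      rw [if_neg hndvd]
    · simp [hD]

section ModByMonic

variable {R : Type*} [CommRing R]

noncomputable def coeffModByMonic (u : R[X]) (n : ℕ) : R[X] →ₗ[R] R :=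
  lcoeff R n ∘ₗ modByMonicHom u

theorem coeffModByMonic_apply (u : R[X]) (n : ℕ) (p : R[X]) :
    coeffModByMonic u n p = (p %ₘ u).coeff n :=
  rfl

variable {u p q : R[X]} {n : ℕ}

theorem coeffModByMonic_eq_of_dvd_sub (hu : u.Monic) (h : u ∣ p - q) :
    coeffModByMonic u n p = coeffModByMonic u n q := by
  rw [coeffModByMonic_apply, coeffModByMonic_apply, modByMonic_eq_of_dvd_sub hu h]

theorem coeffModByMonic_of_degree_lt [Nontrivial R] (hu : u.Monic) (hp : p.degree < u.degree) :
    coeffModByMonic u n p = p.coeff n := by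
  rw [coeffModByMonic_apply, (modByMonic_eq_self_iff hu).2 hp]

end ModByMonic

section Pairing

variable {R : Type*} [CommRing R]

noncomputable def coeffPairing (L : ℕ → R) (n : ℕ) : R[X] →ₗ[R] R :=
  ∑ t ∈ Icc 1 n, L t • lcoeff R t

theorem coeffPairing_apply (L : ℕ → R) (n : ℕ) (p : R[X]) :
    coeffPairing L n p = ∑ t ∈ Icc 1 n, L t * p.coeff t := by
  simp [coeffPairing]

variable {L : ℕ → R}

theorem coeffPairing_X_pow {n m : ℕ} (hm : m ∈ Icc 1 n) : coeffPairing L n (X ^ m) = L m := by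
  simp [coeffPairing_apply, coeff_X_pow, hm]

theorem coeffPairing_X_add_one_pow {m n : ℕ} (hmn : m ≤ n) :
    coeffPairing L n ((X + 1) ^ m) = ∑ t ∈ Icc 1 m, (m.choose t : R) * L t := by
  rw [coeffPairing_apply, ← sum_subset (Icc_subset_Icc_right hmn)]
  · exact sum_congr rfl fun t _ => by rw [coeff_X_add_one_pow, mul_comm]
  · intro t ht htm
    simp only [mem_Icc, not_and, not_le] at ht htm
    rw [coeff_X_add_one_pow, Nat.choose_eq_zero_of_lt (htm ht.1), Nat.cast_zero, mul_zero]

theorem sum_choose_mul_sub_sum_choose_mul (L : ℕ → R) (k D : ℕ) :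
    ∑ t ∈ Icc 1 (k + D), ((k + D).choose t : R) * L t
        - ∑ t ∈ Icc 1 k, (k.choose t : R) * L t
      = coeffPairing L (k + D) (X * ((X + 1) ^ k * ∑ i ∈ range D, (X + 1) ^ i)) := by
  rw [← coeffPairing_X_add_one_pow le_rfl, ← coeffPairing_X_add_one_pow (m := k) (n := k + D)
    (by omega), ← map_sub, mul_left_comm, X_mul_geom_sum_X_add_one, mul_sub, mul_one, ← pow_add]

theorem coeffPairing_X_pow_mul {n j m : ℕ} {p : R[X]} (hj : 1 ≤ j) (hjm : j + m ≤ n + 1)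
    (hp : p.natDegree < m) :
    coeffPairing L n (X ^ j * p) = ∑ i ∈ range m, p.coeff i * L (i + j) := by
  conv_lhs => rw [p.as_sum_range' m hp, mul_sum, map_sum]
  refine sum_congr rfl fun i hi => ?_
  rw [← C_mul_X_pow_eq_monomial, mul_left_comm, ← pow_add, ← smul_eq_C_mul, map_smul,
    coeffPairing_X_pow (by simp only [mem_range, mem_Icc] at hi ⊢; omega), smul_eq_mul, add_comm]

theorem coeffPairing_X_mul_mul_eq_zero {n k : ℕ} {u w : R[X]}
    (hu : ∀ j ∈ Icc 1 k, coeffPairing L n (X ^ j * u) = 0) (hw : w.degree < k) :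
    coeffPairing L n (X * u * w) = 0 := by
  rcases eq_or_ne w 0 with rfl | hw0
  · simp
  rw [w.as_sum_range' k ((natDegree_lt_iff_degree_lt hw0).2 hw), mul_sum, map_sum]
  refine sum_eq_zero fun j hj => ?_
  rw [← C_mul_X_pow_eq_monomial,
    show X * u * (C (w.coeff j) * X ^ j) = C (w.coeff j) * (X ^ (j + 1) * u) by ring,
    ← smul_eq_C_mul, map_smul, hu _ (mem_Icc.2 ⟨le_add_self, mem_range.1 hj⟩), smul_zero]

theorem coeffPairing_X_pow_succ_mul {k D : ℕ} {s : R[X]} (hL : ∀ j ∈ Ioo k (k + D), L j = 0)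
    (hs : s.natDegree < D) :
    coeffPairing L (k + D) (X ^ (k + 1) * s) = s.coeff (D - 1) * L (k + D) := by
  rw [coeffPairing_X_pow_mul le_add_self (by omega) hs, sum_eq_single (D - 1)]
  · rw [show D - 1 + (k + 1) = k + D by omega]
  · intro i hi hne
    rw [hL _ (by simp only [mem_range, mem_Ioo] at hi ⊢; omega), mul_zero]
  · exact fun h => absurd (mem_range.2 (by omega)) h

theorem coeffPairing_X_mul_eq_of_dvd {k D : ℕ} {u g s : R[X]} (hu : u.Monic)
    (hD : u.natDegree = D) (h_u : ∀ j ∈ Icc 1 k, coeffPairing L (k + D) (X ^ j * u) = 0)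
    (hL : ∀ j ∈ Ioo k (k + D), L j = 0) (hg : g.natDegree < k + D) (hs : s.natDegree < D)
    (hdvd : u ∣ g - X ^ k * s) :
    coeffPairing L (k + D) (X * g) = s.coeff (D - 1) * L (k + D) := by
  obtain ⟨w, hw⟩ := hdvd
  have hw_deg : w.degree < k := by
    rcases eq_or_ne w 0 with rfl | hw0
    · simp
    have hXs : (X ^ k * s).natDegree < k + D :=
      natDegree_mul_le.trans_lt (by grw [natDegree_X_pow_le]; omega)
    have := (natDegree_sub_le _ _).trans_lt (max_lt hg hXs)
    rw [hw, hu.natDegree_mul' hw0, hD] at this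
    exact degree_le_natDegree.trans_lt (by exact_mod_cast (by omega : w.natDegree < k))
  rw [show X * g = X * u * w + X ^ (k + 1) * s by linear_combination X * hw, map_add,
    coeffPairing_X_mul_mul_eq_zero h_u hw_deg, coeffPairing_X_pow_succ_mul hL hs, zero_add]

end Pairing

section ShiftedBinomial

variable {R : Type*} [CommRing R] [Nontrivial R] (c : R) {D : ℕ}

theorem monic_X_add_one_pow_sub_C (hD : 0 < D) : ((X + 1) ^ D - C c).Monic :=
  ((monic_X_add_C 1).pow D).sub_of_left <| degree_C_le.trans_lt <|
    natDegree_pos_iff_degree_pos.1 (by rwa [natDegree_pow_X_add_C])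

theorem natDegree_X_add_one_pow_sub_C : ((X + 1) ^ D - C c).natDegree = D := by
  rw [natDegree_sub_C, ← C_1, natDegree_pow_X_add_C]

theorem coeffPairing_X_pow_mul_X_add_one_pow_sub_C {L : ℕ → R} {n j : ℕ} (hj : 1 ≤ j)
    (hjn : j + D ≤ n) :
    coeffPairing L n (X ^ j * ((X + 1) ^ D - C c))
      = ∑ i ∈ Icc 1 D, (D.choose i : R) * L (i + j) - (c - 1) * L j := by
  rw [coeffPairing_X_pow_mul hj (by omega)
      ((natDegree_X_add_one_pow_sub_C c).trans_lt D.lt_succ_self),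
    sum_range_succ', ← Ico_add_one_right_eq_Icc, sum_Ico_eq_sum_range]
  simp only [coeff_sub, coeff_X_add_one_pow, coeff_C_succ, sub_zero, Nat.choose_zero_right,
    Nat.cast_one, coeff_C, ↓reduceIte, zero_add, add_tsub_cancel_right, add_comm 1]
  ring

theorem coeffModByMonic_X_add_one_pow_mul_add {r : ℕ} (hr : r < D) (i : ℕ) :
    coeffModByMonic ((X + 1) ^ D - C c) (D - 1) ((X + 1) ^ (D * i + r))
      = if r = D - 1 then c ^ i else 0 := by
  have hu := monic_X_add_one_pow_sub_C c (by omega : 0 < D)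
  have hdvd : (X + 1) ^ D - C c ∣ (X + 1) ^ (D * i + r) - C (c ^ i) * (X + 1) ^ r := by
    rw [pow_add, pow_mul, C_pow, ← sub_mul]
    exact (sub_dvd_pow_sub_pow _ _ _).mul_right _
  rw [coeffModByMonic_eq_of_dvd_sub hu hdvd, coeffModByMonic_of_degree_lt hu, coeff_C_mul,
    coeff_X_add_one_pow]
  · split_ifs with h
    · simp [h]
    · rw [Nat.choose_eq_zero_of_lt (by omega), Nat.cast_zero, mul_zero]
  · refine degree_lt_degree ((natDegree_C_mul_le _ _).trans_lt ?_)
    rwa [natDegree_X_add_one_pow_sub_C, ← C_1, natDegree_pow_X_add_C]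

theorem coeffModByMonic_X_add_one_pow_mul_sub {T n : ℕ} (hn : n < T * D) :
    coeffModByMonic ((X + 1) ^ D - C c) (D - 1) ((X + 1) ^ (T * D - 1 - n))
      = if D ∣ n then c ^ (T - 1 - n / D) else 0 := by
  have hD : 0 < D := Nat.pos_of_ne_zero (by rintro rfl; simp at hn)
  have hn' := Nat.div_add_mod n D
  have hr := Nat.mod_lt n hD
  obtain ⟨t, rfl⟩ : ∃ t, T = t + n / D + 1 :=
    ⟨T - n / D - 1, by have := (Nat.div_lt_iff_lt_mul hD).2 hn; omega⟩
  have hexp : (t + n / D + 1) * D - 1 - n = D * t + (D - 1 - n % D) := by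
    rw [show (t + n / D + 1) * D = D * t + D * (n / D) + D by ring]
    omega
  rw [hexp, coeffModByMonic_X_add_one_pow_mul_add c (by omega)]
  simp only [Nat.dvd_iff_mod_eq_zero, show t + n / D + 1 - 1 - n / D = t by omega]
  exact if_congr (by omega) rfl rfl

theorem coeffModByMonic_aeval_X_add_one_reflect {T : ℕ} {P : R[X]} (hP : P.natDegree < T * D) :
    coeffModByMonic ((X + 1) ^ D - C c) (D - 1) (aeval (X + 1) (reflect (T * D - 1) P))
      = ∑ j ∈ range T, P.coeff (j * D) * c ^ (T - 1 - j) := by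
  have hD : 0 < D := Nat.pos_of_ne_zero (by rintro rfl; simp at hP)
  calc _ = ∑ n ∈ range (T * D), if D ∣ n then P.coeff n * c ^ (T - 1 - n / D) else 0 := by
        rw [aeval_reflect _ (by omega), Nat.sub_add_cancel (by omega), map_sum]
        refine sum_congr rfl fun n hn => ?_
        rw [map_smul, coeffModByMonic_X_add_one_pow_mul_sub c (mem_range.1 hn), smul_eq_mul,
          mul_ite, mul_zero]
    _ = _ := by simp [sum_range_mul_ite_dvd hD, Nat.mul_div_cancel _ hD]

theorem coeffModByMonic_X_add_one_pow_mul_geom_sum_pow (hD : 0 < D) (k : ℕ) :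
    coeffModByMonic ((X + 1) ^ D - C c) (D - 1)
        ((X + 1) ^ k * (∑ i ∈ range D, (X + 1) ^ i) ^ (k + 1))
      = ∑ j ∈ range (k + 1),
          ((∑ i ∈ range D, (X : R[X]) ^ i) ^ (k + 1)).coeff (j * D) * c ^ (k - j) := by
  have hQ : ((∑ i ∈ range D, (X : R[X]) ^ i) ^ (k + 1)).natDegree < (k + 1) * D :=
    (natDegree_geom_sum_pow_le natDegree_X_le D (k + 1)).trans_lt
      (Nat.mul_lt_mul_of_pos_left (by omega) (by omega))
  have haeval : (X + 1 : R[X]) ^ k * (∑ i ∈ range D, (X + 1) ^ i) ^ (k + 1)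
      = aeval (X + 1) ((X : R[X]) ^ k * (∑ i ∈ range D, X ^ i) ^ (k + 1)) := by
    simp [map_sum]
  rw [haeval, X_pow_mul_geom_sum_pow_eq_reflect hD, coeffModByMonic_aeval_X_add_one_reflect c hQ]
  simp

end ShiftedBinomial

theorem coeffPairing_X_mul_eq_coeffModByMonic {F : Type*} [Field F] {c : F} {k D : ℕ}
    {L : ℕ → F} (hc : c ≠ 1) (hD : 0 < D)
    (hrec : ∀ j ∈ Icc 1 k, (c - 1) * L j = ∑ i ∈ Icc 1 D, (D.choose i : F) * L (i + j))
    (hL : ∀ j ∈ Ioo k (k + D), L j = 0) (hLtop : L (k + D) = (c - 1) ^ k)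
    {g : F[X]} (hg : g.natDegree < k + D) :
    coeffPairing L (k + D) (X * g)
      = coeffModByMonic ((X + 1) ^ D - C c) (D - 1) ((∑ i ∈ range D, (X + 1) ^ i) ^ k * g) := by
  set u : F[X] := (X + 1) ^ D - C c
  set q : F[X] := ∑ i ∈ range D, (X + 1) ^ i
  have hu : u.Monic := monic_X_add_one_pow_sub_C c hD
  have hu_deg : u.natDegree = D := natDegree_X_add_one_pow_sub_C c
  -- `X` is invertible modulo `u`, with inverse `q / (c - 1)`.
  have hXq : AdjoinRoot.mk u (X * q) = AdjoinRoot.mk u (C (c - 1)) := by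
    rw [AdjoinRoot.mk_eq_mk, X_mul_geom_sum_X_add_one]
    exact ⟨1, by simp only [u, C_sub, C_1]; ring⟩
  set p : F[X] := C ((c - 1) ^ k)⁻¹ * (q ^ k * g)
  have hs : (p %ₘ u).natDegree < D :=
    hu_deg ▸ natDegree_modByMonic_lt p hu fun h => by
      rw [h, natDegree_one] at hu_deg
      omega
  have hdvd : u ∣ g - X ^ k * (p %ₘ u) := by
    rw [← AdjoinRoot.mk_eq_mk, map_mul, ← AdjoinRoot.modByMonicHom_mk hu,
      AdjoinRoot.mk_leftInverse hu, ← map_mul,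
      show X ^ k * p = C ((c - 1) ^ k)⁻¹ * (X * q) ^ k * g by ring, map_mul, map_mul, map_pow,
      hXq, ← map_pow, ← map_mul, ← C_pow, ← C_mul,
      inv_mul_cancel₀ (pow_ne_zero _ (sub_ne_zero.2 hc)), C_1, map_one, one_mul]
  have h_u : ∀ j ∈ Icc 1 k, coeffPairing L (k + D) (X ^ j * u) = 0 := fun j hj => by
    rw [coeffPairing_X_pow_mul_X_add_one_pow_sub_C c (mem_Icc.1 hj).1
      (Nat.add_le_add_right (mem_Icc.1 hj).2 D), hrec j hj, sub_self]
  rw [coeffPairing_X_mul_eq_of_dvd hu hu_deg h_u hL hg hs hdvd, hLtop, ← coeffModByMonic_apply]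
  simp only [p, ← smul_eq_C_mul, map_smul, smul_eq_mul]
  field_simp [sub_ne_zero.2 hc]

/-- With `T = K - D + 1` and `S = ⌊T(D-1)/D⌋`, and `a_n` the coefficient of
`x^n` in `(1 + x + ⋯ + x^{D-1})^T`, the quantity `L` equals
`(1/D) · Σ_{k=0}^{S} a_{kD} · N^{T-k}`. -/
theorem stmt_0 (K D N : ℕ) (hD : 1 < D) (hK : D < K) (hN : 1 < N)
    (L : ℕ → ℚ)
    (hLK : L K = ((N : ℚ) - 1) ^ (K - D))
    (hzero : ∀ j ∈ Finset.Icc (K - D + 1) (K - 1), L j = 0)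
    (hrec : ∀ j ∈ Finset.Icc 1 (K - D),
      L j = (1 / ((N : ℚ) - 1)) * ∑ i ∈ Finset.Icc 1 D, (D.choose i : ℚ) * L (i + j)) :
    ((N : ℚ) / D) * (∑ t ∈ Finset.Icc 1 K, (K.choose t : ℚ) * L t)
      - ((N : ℚ) / D) * (∑ t ∈ Finset.Icc 1 (K - D), ((K - D).choose t : ℚ) * L t)
    = (1 / (D : ℚ)) * ∑ k ∈ Finset.range ((K - D + 1) * (D - 1) / D + 1),
        (((∑ i ∈ Finset.range D, (Polynomial.X : ℚ[X]) ^ i) ^ (K - D + 1)).coeff (k * D))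
          * (N : ℚ) ^ (K - D + 1 - k) := by
  obtain ⟨k, rfl⟩ : ∃ k, K = k + D := ⟨K - D, by omega⟩
  simp only [Nat.add_sub_cancel] at hLK hzero hrec ⊢
  have hD0 : 0 < D := by omega
  have hN1 : (N : ℚ) ≠ 1 := by exact_mod_cast hN.ne'
  have hrec' (j) (hj : j ∈ Icc 1 k) :
      ((N : ℚ) - 1) * L j = ∑ i ∈ Icc 1 D, (D.choose i : ℚ) * L (i + j) := by
    rw [hrec j hj]
    field_simp [sub_ne_zero.2 hN1]
  have hzero' (j) (hj : j ∈ Ioo k (k + D)) : L j = 0 :=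
    hzero j (by simp only [mem_Ioo, mem_Icc] at hj ⊢; omega)
  have hS : (k + 1) * (D - 1) / D < k + 1 :=
    (Nat.div_lt_iff_lt_mul hD0).2 (Nat.mul_lt_mul_of_pos_left (by omega) (by omega))
  rw [← mul_sub, sum_choose_mul_sub_sum_choose_mul, coeffPairing_X_mul_eq_coeffModByMonic hN1 hD0
      hrec' hzero' hLK (natDegree_X_add_one_pow_mul_geom_sum_lt hD0 k), mul_left_comm, ← pow_succ,
    coeffModByMonic_X_add_one_pow_mul_geom_sum_pow _ hD0, sum_range_coeff_mul_eq_of_natDegree_le hD0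
      (natDegree_geom_sum_pow_le natDegree_X_le D (k + 1)) hS, mul_sum, mul_sum]
  refine sum_congr rfl fun j hj => ?_
  rw [show k + 1 - j = k - j + 1 by simp only [mem_range] at hj; omega, pow_succ (N : ℚ)]
  field_simp
end

section
/- Define M_t = Σ_{m=0}^{D−1} c_m · r_m^t for integers t ≥ 0. Then M_0 = (N−1)^{K−D} and M_t = 0 for every t ∈ {1, …, D−1}. -/
/-!
With `v_m = u_m⁻¹ = s⁻¹ ζ⁻ᵐ` (`ζ` a primitive `D`-th root of unity), each term is
`c_m r_m^t = (N-1)^(K-D)/D · v_m^t (1 - v_m)^(D-1-t)`, so `M_t` is `(N-1)^(K-D)/D` times the sum of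
the degree-`(D-1)` polynomial `X^t (1-X)^(D-1-t)` over the coset `s⁻¹ μ_D`. Since
`∑_m ζ^(i m) = 0` for `0 < i < D`, that sum is `D` times the constant term, i.e. `D` if `t = 0`
and `0` otherwise.
-/

open Finset Complex Polynomial

namespace IsPrimitiveRoot

variable {R : Type*} [CommRing R] [IsDomain R] {ζ : R} {n : ℕ}

theorem geom_sum_pow_eq_zero (hζ : IsPrimitiveRoot ζ n) {j : ℕ} (hj0 : j ≠ 0) (hjn : j < n) :
    ∑ m ∈ range n, (ζ ^ j) ^ m = 0 := by
  have hmul : (∑ m ∈ range n, (ζ ^ j) ^ m) * (ζ ^ j - 1) = 0 := by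
    rw [geom_sum_mul, ← pow_mul, mul_comm, pow_mul, hζ.pow_eq_one, one_pow, sub_self]
  exact (mul_eq_zero.1 hmul).resolve_right (sub_ne_zero.2 (hζ.pow_ne_one_of_pos_of_lt hj0 hjn))

theorem sum_eval_mul_pow (hζ : IsPrimitiveRoot ζ n) (a : R) {P : R[X]} (hP : P.natDegree < n) :
    ∑ m ∈ range n, P.eval (a * ζ ^ m) = n * P.coeff 0 := by
  simp_rw [eval_eq_sum_range' hP]
  rw [sum_comm]
  have hterm : ∀ i ∈ range n, ∑ m ∈ range n, P.coeff i * (a * ζ ^ m) ^ i =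
      P.coeff i * a ^ i * ∑ m ∈ range n, (ζ ^ i) ^ m := by
    intro i _
    rw [mul_sum]
    refine sum_congr rfl fun m _ => ?_
    ring
  rw [sum_congr rfl hterm, sum_eq_single_of_mem 0 (mem_range.2 (by omega))]
  · simp [mul_comm]
  · intro i hi hi0
    rw [hζ.geom_sum_pow_eq_zero hi0 (mem_range.1 hi), mul_zero]

theorem sum_eval_X_pow_mul_one_sub_X_pow (hζ : IsPrimitiveRoot ζ n) (a : R) {t k : ℕ}
    (htk : t ≤ k) (hkn : k < n) :
    ∑ m ∈ range n, (X ^ t * (1 - X) ^ (k - t) : R[X]).eval (a * ζ ^ m) =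
      if t = 0 then (n : R) else 0 := by
  have hdeg : (X ^ t * (1 - X) ^ (k - t) : R[X]).natDegree < n := by
    have h1 : (1 - X : R[X]).natDegree ≤ 1 := by compute_degree
    have := natDegree_mul_le.trans
      (add_le_add (natDegree_X_pow_le (R := R) t) (natDegree_pow_le_of_le (k - t) h1))
    omega
  rw [hζ.sum_eval_mul_pow a hdeg, coeff_zero_eq_eval_zero]
  split_ifs with ht <;> simp [ht]

end IsPrimitiveRoot

theorem eval_inv_X_pow_mul_one_sub_X_pow {K : Type*} [Field K] {u : K} (hu0 : u ≠ 0)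
    (hu1 : u ≠ 1) {t k : ℕ} (htk : t ≤ k) :
    (X ^ t * (1 - X) ^ (k - t) : K[X]).eval u⁻¹ = (u - 1) ^ k / u ^ k * (1 / (u - 1)) ^ t := by
  obtain ⟨j, rfl⟩ := Nat.exists_eq_add_of_le htk
  have hu1' : u - 1 ≠ 0 := sub_ne_zero.2 hu1
  have h1u : 1 - u⁻¹ = (u - 1) / u := by field_simp
  simp only [eval_mul, eval_pow, eval_X, eval_sub, eval_one, Nat.add_sub_cancel_left, h1u]
  rw [pow_add, pow_add, one_div, inv_pow, div_pow, inv_pow]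
  field_simp

theorem stmt_4_general (K D N : ℕ) (hN : 1 < N)
    (s : ℝ) (hsD : s ^ D = (N : ℝ))
    (u r c : ℕ → ℂ)
    (hu : ∀ m, u m = Complex.exp (2 * Real.pi * Complex.I * m / D) * (s : ℂ))
    (hr : ∀ m, r m = 1 / (u m - 1))
    (hc : ∀ m, c m = (((N : ℂ) - 1) ^ (K - D) / D) * (u m - 1) ^ (D - 1) / (u m) ^ (D - 1))
    (M : ℕ → ℂ)
    (hM : ∀ t, M t = ∑ m ∈ Finset.range D, c m * (r m) ^ t) :
    M 0 = ((N : ℂ) - 1) ^ (K - D) ∧ ∀ t ∈ Finset.Icc 1 (D - 1), M t = 0 := by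
  have hsD' : (s : ℂ) ^ D = N := by exact_mod_cast hsD
  have hD0 : D ≠ 0 := by
    rintro rfl
    exact hN.ne (by exact_mod_cast (pow_zero s).symm.trans hsD)
  have hN1 : (N : ℂ) ≠ 1 := by exact_mod_cast hN.ne'
  set ζ := Complex.exp (2 * Real.pi * Complex.I / D)
  have hζ : IsPrimitiveRoot ζ D := Complex.isPrimitiveRoot_exp D hD0
  have huζ : ∀ m, u m = s * ζ ^ m := fun m => by
    rw [hu, ← Complex.exp_nat_mul, mul_comm]
    ring_nf
  -- `u m ≠ 0, 1` because `u m` is a `D`-th root of `N ∉ {0, 1}`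
  have hu_pow : ∀ m, u m ^ D = N := fun m => by
    rw [huζ, mul_pow, ← pow_mul, mul_comm m, pow_mul, hζ.pow_eq_one, one_pow, mul_one, hsD']
  have hu0 : ∀ m, u m ≠ 0 := fun m h => by
    have := hu_pow m
    rw [h, zero_pow hD0] at this
    exact (Nat.cast_ne_zero.2 (by omega : N ≠ 0)) this.symm
  have hu1 : ∀ m, u m ≠ 1 := fun m h => hN1 (by rw [← hu_pow m, h, one_pow])
  have hMt : ∀ t ≤ D - 1,
      M t = ((N : ℂ) - 1) ^ (K - D) / D * if t = 0 then (D : ℂ) else 0 := by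
    intro t ht
    rw [hM, ← hζ.inv.sum_eval_X_pow_mul_one_sub_X_pow (s : ℂ)⁻¹ ht (by omega), mul_sum]
    refine sum_congr rfl fun m _ => ?_
    rw [hc, hr, mul_div_assoc, mul_assoc,
      ← eval_inv_X_pow_mul_one_sub_X_pow (hu0 m) (hu1 m) ht, huζ, mul_inv, inv_pow]
  have hDC : (D : ℂ) ≠ 0 := by exact_mod_cast hD0
  refine ⟨?_, fun t ht => ?_⟩
  · rw [hMt 0 (Nat.zero_le _), if_pos rfl, div_mul_cancel₀ _ hDC]
  · rw [mem_Icc] at ht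
    rw [hMt t ht.2, if_neg (by omega), mul_zero]

/-- With `M_t = Σ_{m=0}^{D-1} c_m · r_m^t`, we have `M_0 = (N-1)^{K-D}` and
`M_t = 0` for every `t ∈ {1,…,D-1}`. -/
theorem stmt_4 (K D N : ℕ) (hD : 1 < D) (hK : D < K) (hN : 1 < N)
    (s : ℝ) (hs : 0 < s) (hsD : s ^ D = (N : ℝ))
    (u r c : ℕ → ℂ)
    (hu : ∀ m, u m = Complex.exp (2 * Real.pi * Complex.I * m / D) * (s : ℂ))
    (hr : ∀ m, r m = 1 / (u m - 1))
    (hc : ∀ m, c m = (((N : ℂ) - 1) ^ (K - D) / D) * (u m - 1) ^ (D - 1) / (u m) ^ (D - 1))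
    (M : ℕ → ℂ)
    (hM : ∀ t, M t = ∑ m ∈ Finset.range D, c m * (r m) ^ t) :
    M 0 = ((N : ℂ) - 1) ^ (K - D) ∧ ∀ t ∈ Finset.Icc 1 (D - 1), M t = 0 :=
  stmt_4_general K D N hN s hsD u r c hu hr hc M hM
end

section
/- For every t ∈ {0, …, K−1}, L_{K−t} = Σ_{m=0}^{D−1} c_m · r_m^t. -/
/-! The numbers `r_m = 1/(u_m - 1)` are roots of the characteristic equation of the recurrence:
`∑_{i=1}^D C(D,i) r_m^{-i} = (1 + (u_m - 1))^D - 1 = u_m^D - 1 = N - 1`. Hence `t ↦ ∑_m c_m r_m^t`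
satisfies the same recurrence as `t ↦ L_{K-t}`, and it suffices to compare the first `D` values.
For `t < D` we have `c_m r_m^t = (N-1)^{K-D}/(D N) · u_m (u_m - 1)^{D-1-t}`; after expanding, only
power sums `∑_m u_m^e` with `0 < e ≤ D` occur, and over the `D`-th roots `u_m` of `N` these vanish
except for `e = D`, where the sum is `D N`. This term occurs only for `t = 0`. -/

open Finset Complex

section CommRing

variable {R : Type*} [CommRing R] [IsDomain R] {ζ : R} {D : ℕ}

theorem IsPrimitiveRoot.sum_mul_pow_pow (hζ : IsPrimitiveRoot ζ D) (x : R) {e : ℕ}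
    (he : 0 < e) (heD : e ≤ D) :
    ∑ m ∈ range D, (ζ ^ m * x) ^ e = if e = D then D * x ^ D else 0 := by
  simp_rw [mul_pow, ← pow_mul, mul_comm _ e, pow_mul, ← sum_mul]
  split_ifs with h
  · simp [h, hζ.pow_eq_one]
  · have hne : ζ ^ e ≠ 1 := hζ.pow_ne_one_of_pos_of_lt he.ne' (lt_of_le_of_ne heD h)
    have hgeom : ∑ m ∈ range D, (ζ ^ e) ^ m = 0 := by
      refine eq_zero_of_ne_zero_of_mul_left_eq_zero (sub_ne_zero_of_ne hne) ?_
      rw [mul_geom_sum, ← pow_mul, mul_comm, pow_mul, hζ.pow_eq_one, one_pow, sub_self]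
    rw [hgeom, zero_mul]

theorem IsPrimitiveRoot.sum_mul_mul_sub_one_pow (hζ : IsPrimitiveRoot ζ D) (x : R) {j : ℕ}
    (hj : j < D) :
    ∑ m ∈ range D, ζ ^ m * x * (ζ ^ m * x - 1) ^ j = if j + 1 = D then D * x ^ D else 0 := by
  have hterm : ∀ k ∈ range (j + 1), ∑ m ∈ range D,
      ζ ^ m * x * ((-1) ^ (k + j) * (ζ ^ m * x) ^ k * (j.choose k : R)) =
        (-1) ^ (k + j) * j.choose k * if k + 1 = D then (D : R) * x ^ D else 0 := by
    intro k hk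
    rw [← hζ.sum_mul_pow_pow x (by omega : 0 < k + 1) (by rw [mem_range] at hk; omega), mul_sum]
    exact sum_congr rfl fun m _ => by ring
  simp_rw [sub_pow, one_pow, mul_one, mul_sum]
  rw [sum_comm, sum_congr rfl hterm]
  split_ifs with h
  · rw [sum_eq_single_of_mem j (self_mem_range_succ j) fun k hk hkj => ?_]
    · simp [h]
    · rw [mem_range] at hk
      rw [if_neg (by omega), mul_zero]
  · exact sum_eq_zero fun k hk => by rw [mem_range] at hk; rw [if_neg (by omega), mul_zero]

end CommRing

theorem sum_Icc_choose_mul_pow_add_one {R : Type*} [CommSemiring R] (v : R) (D : ℕ) :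
    ∑ i ∈ Icc 1 D, (D.choose i : R) * v ^ i + 1 = (1 + v) ^ D := by
  rw [add_comm 1 v, add_pow, Nat.range_succ_eq_Icc_zero,
    ← insert_Icc_add_one_left_eq_Icc D.zero_le, sum_insert (by simp), zero_add, add_comm]
  simp [mul_comm]

theorem eq_of_forall_lt_of_recurrence {R : Type*} [Semiring R] {f g : ℕ → R} {D n : ℕ}
    (w : ℕ → R) (hinit : ∀ t < D, f t = g t)
    (hf : ∀ t, D ≤ t → t < n → f t = ∑ i ∈ Icc 1 D, w i * f (t - i))
    (hg : ∀ t, D ≤ t → t < n → g t = ∑ i ∈ Icc 1 D, w i * g (t - i)) :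
    ∀ t < n, f t = g t := by
  intro t
  induction t using Nat.strong_induction_on with
  | _ t ih =>
    intro htn
    rcases lt_or_ge t D with htD | hDt
    · exact hinit t htD
    · rw [hf t hDt htn, hg t hDt htn]
      refine sum_congr rfl fun i hi => ?_
      rw [mem_Icc] at hi
      rw [ih (t - i) (by omega) (by omega)]

section Field

variable {F : Type*} [Field F] {D : ℕ}

theorem sum_mul_inv_pow_eq_sum_Icc_choose {ι : Type*} (S : Finset ι) (c v : ι → F) {N : F}
    (hN : N ≠ 1) (hv : ∀ m, v m ≠ 0) (hvN : ∀ m, (1 + v m) ^ D = N) {t : ℕ} (hDt : D ≤ t) :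
    ∑ m ∈ S, c m * (v m)⁻¹ ^ t =
      ∑ i ∈ Icc 1 D, (N - 1)⁻¹ * D.choose i * ∑ m ∈ S, c m * (v m)⁻¹ ^ (t - i) := by
  have hN1 : N - 1 ≠ 0 := sub_ne_zero.2 hN
  simp_rw [mul_sum]
  rw [sum_comm]
  refine sum_congr rfl fun m _ => ?_
  have hchar : ∑ i ∈ Icc 1 D, (D.choose i : F) * v m ^ i = N - 1 := by
    rw [← hvN m, ← sum_Icc_choose_mul_pow_add_one, add_sub_cancel_right]
  have hshift : ∀ i ∈ Icc 1 D, (v m)⁻¹ ^ (t - i) = (v m)⁻¹ ^ t * v m ^ i := fun i hi => by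
    rw [inv_pow_sub₀ (hv m) (by rw [mem_Icc] at hi; omega), inv_pow, mul_comm]
  calc c m * (v m)⁻¹ ^ t = (N - 1)⁻¹ * c m * (v m)⁻¹ ^ t * (N - 1) := by field_simp
    _ = _ := by
      rw [← hchar, mul_sum]
      refine sum_congr rfl fun i hi => ?_
      rw [hshift i hi]
      ring

theorem sub_one_pow_div_pow_mul_pow {y : F} (hy : y ≠ 0) (hy1 : y ≠ 1) {t : ℕ} (ht : t < D) :
    (y - 1) ^ (D - 1) / y ^ (D - 1) * (1 / (y - 1)) ^ t = y * (y - 1) ^ (D - 1 - t) / y ^ D := by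
  obtain ⟨j, rfl⟩ : ∃ j, D = t + j + 1 := ⟨D - t - 1, by omega⟩
  have hy1' : y - 1 ≠ 0 := sub_ne_zero.2 hy1
  rw [show t + j + 1 - 1 - t = j by omega, show t + j + 1 - 1 = t + j by omega, one_div, inv_pow]
  field_simp
  ring

theorem IsPrimitiveRoot.sum_div_mul_sub_one_pow_div_pow_mul_pow {ζ : F}
    (hζ : IsPrimitiveRoot ζ D) {x : F} (hx : x ≠ 0) (h1 : ∀ m, ζ ^ m * x ≠ 1) (a : F) {t : ℕ}
    (ht : t < D) :
    ∑ m ∈ range D, a / D * (ζ ^ m * x - 1) ^ (D - 1) / (ζ ^ m * x) ^ (D - 1) *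
      (1 / (ζ ^ m * x - 1)) ^ t = if t = 0 then a else 0 := by
  have : NeZero D := ⟨by omega⟩
  have hD : (D : F) ≠ 0 := hζ.neZero'.out
  have hterm : ∀ m, a / D * (ζ ^ m * x - 1) ^ (D - 1) / (ζ ^ m * x) ^ (D - 1) *
      (1 / (ζ ^ m * x - 1)) ^ t =
        a / (D * x ^ D) * (ζ ^ m * x * (ζ ^ m * x - 1) ^ (D - 1 - t)) := by
    intro m
    have hy : ζ ^ m * x ≠ 0 := mul_ne_zero (pow_ne_zero _ (hζ.ne_zero (by omega))) hx
    rw [mul_div_assoc, mul_assoc, sub_one_pow_div_pow_mul_pow hy (h1 m) ht, mul_pow, ← pow_mul,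
      mul_comm m D, pow_mul, hζ.pow_eq_one, one_pow, one_mul]
    field_simp
  rw [sum_congr rfl fun m _ => hterm m, ← mul_sum, hζ.sum_mul_mul_sub_one_pow x (by omega)]
  by_cases ht0 : t = 0
  · rw [if_pos (by omega), if_pos ht0]
    field_simp
  · rw [if_neg (by omega), if_neg ht0, mul_zero]

end Field

/-- For every `t ∈ {0,…,K-1}`, `L_{K-t} = Σ_{m=0}^{D-1} c_m · r_m^t`. -/
theorem stmt_5 (K D N : ℕ) (hD : 1 < D) (hK : D < K) (hN : 1 < N)
    (L : ℕ → ℂ)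
    (hLK : L K = ((N : ℂ) - 1) ^ (K - D))
    (hzero : ∀ j ∈ Finset.Icc (K - D + 1) (K - 1), L j = 0)
    (hrec : ∀ j ∈ Finset.Icc 1 (K - D),
      L j = (1 / ((N : ℂ) - 1)) * ∑ i ∈ Finset.Icc 1 D, (D.choose i : ℂ) * L (i + j))
    (s : ℝ) (hs : 0 < s) (hsD : s ^ D = (N : ℝ))
    (u r c : ℕ → ℂ)
    (hu : ∀ m, u m = Complex.exp (2 * Real.pi * Complex.I * m / D) * (s : ℂ))
    (hr : ∀ m, r m = 1 / (u m - 1))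
    (hc : ∀ m, c m = (((N : ℂ) - 1) ^ (K - D) / D) * (u m - 1) ^ (D - 1) / (u m) ^ (D - 1)) :
    ∀ t ∈ Finset.range K, L (K - t) = ∑ m ∈ Finset.range D, c m * (r m) ^ t := by
  intro t ht
  have hζ := isPrimitiveRoot_exp D (by omega)
  have hu' : ∀ m, u m = exp (2 * Real.pi * I / D) ^ m * s := fun m => by
    rw [hu, ← exp_nat_mul]
    ring_nf
  have hN1 : (N : ℂ) ≠ 1 := by exact_mod_cast hN.ne'
  have huD : ∀ m, u m ^ D = N := fun m => by
    rw [hu', mul_pow, ← pow_mul, mul_comm m D, pow_mul, hζ.pow_eq_one, one_pow, one_mul]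
    exact_mod_cast hsD
  have hu1 : ∀ m, u m ≠ 1 := fun m h => hN1 (by rw [← huD m, h, one_pow])
  refine eq_of_forall_lt_of_recurrence (f := fun t => L (K - t))
    (g := fun t => ∑ m ∈ range D, c m * r m ^ t) (D := D) (fun i => ((N : ℂ) - 1)⁻¹ * D.choose i)
    (fun t htD => ?_) (fun t hDt htK => ?_) (fun t hDt _ => ?_) t (mem_range.1 ht)
  · simp only [hc, hr, hu']
    rw [hζ.sum_div_mul_sub_one_pow_div_pow_mul_pow (ofReal_ne_zero.2 hs.ne')
      (fun m => hu' m ▸ hu1 m) _ htD]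
    split_ifs with ht0
    · rw [ht0, Nat.sub_zero, hLK]
    · exact hzero _ (mem_Icc.2 ⟨by omega, by omega⟩)
  · rw [hrec (K - t) (mem_Icc.2 ⟨by omega, by omega⟩), one_div, mul_sum]
    refine sum_congr rfl fun i hi => ?_
    rw [mem_Icc] at hi
    rw [show i + (K - t) = K - (t - i) by omega, mul_assoc]
  · simp only [hr, one_div]
    exact sum_mul_inv_pow_eq_sum_Icc_choose _ c (fun m => u m - 1) hN1
      (fun m => sub_ne_zero.2 (hu1 m)) (fun m => by rw [add_sub_cancel, huD]) hDt
end

section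
/- The quantity L satisfies L = (N/D) · Σ_{m=0}^{D−1} c_m · (N−1) · r_m^D · (1 + r_m)^{K−D}. -/
open Finset Complex

/-!
The recurrence determines `L 1, …, L K` from the boundary values `L (K - D + 1), …, L K`.
The exponential sum `ℓ j = ∑ m, c m * r m ^ (K - j)` satisfies the same recurrence, because
`(1 + r m) ^ D = u m ^ D * r m ^ D = N * r m ^ D`, and has the same boundary values, because
`∑ m, c m * r m ^ p = (N - 1) ^ (K - D) * 0 ^ p` for `p < D` (a roots-of-unity filter: the summand
is a polynomial of degree `D - 1` in `(u m)⁻¹`). So `L = ℓ`, and the binomial theorem turns the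
two sums into `∑ m, c m * ((1 + r m) ^ K - r m ^ K)` and
`∑ m, c m * r m ^ D * ((1 + r m) ^ (K - D) - r m ^ (K - D))`, whose difference is the right-hand
side.
-/

theorem sum_Icc_choose_mul_pow_sub {R : Type*} [CommRing R] {n m : ℕ} (h : n ≤ m) (x : R) :
    ∑ t ∈ Icc 1 n, (n.choose t : R) * x ^ (m - t) = x ^ (m - n) * ((1 + x) ^ n - x ^ n) := by
  have hbinom : (1 + x) ^ n = ∑ t ∈ range (n + 1), (n.choose t : R) * x ^ (n - t) := by
    rw [add_pow]
    exact sum_congr rfl fun t _ => by ring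
  rw [hbinom, sum_range_succ', ← Finset.Ico_add_one_right_eq_Icc, sum_Ico_eq_sum_range]
  simp only [Nat.choose_zero_right, Nat.cast_one, Nat.sub_zero, one_mul, add_sub_cancel_right,
    Nat.add_sub_cancel, mul_sum]
  refine sum_congr rfl fun t ht => ?_
  rw [mem_range] at ht
  rw [mul_left_comm, ← pow_add, add_comm 1 t]
  congr 2
  omega

section ExponentialSums

variable {R ι : Type*} [CommRing R] (S : Finset ι) (c r : ι → R)

theorem sum_Icc_choose_mul_sum_pow_sub {n K : ℕ} (h : n ≤ K) :
    ∑ t ∈ Icc 1 n, (n.choose t : R) * ∑ m ∈ S, c m * r m ^ (K - t)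
      = ∑ m ∈ S, c m * (r m ^ (K - n) * ((1 + r m) ^ n - r m ^ n)) := by
  simp_rw [mul_sum]
  rw [sum_comm]
  refine sum_congr rfl fun m _ => ?_
  rw [← sum_Icc_choose_mul_pow_sub h, mul_sum]
  exact sum_congr rfl fun t _ => by ring

variable {S c r} {N : R} {D : ℕ}

theorem sub_one_mul_sum_mul_pow_eq_sum_Icc_choose
    (hr : ∀ m ∈ S, (1 + r m) ^ D = N * r m ^ D) {K j : ℕ} (hj : j + D ≤ K) :
    (N - 1) * ∑ m ∈ S, c m * r m ^ (K - j)
      = ∑ i ∈ Icc 1 D, (D.choose i : R) * ∑ m ∈ S, c m * r m ^ (K - (i + j)) := by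
  have hshift : ∀ i, K - (i + j) = K - j - i := fun i => by omega
  simp_rw [hshift]
  rw [sum_Icc_choose_mul_sum_pow_sub _ _ _ (by omega : D ≤ K - j), mul_sum]
  refine sum_congr rfl fun m hm => ?_
  have hsplit : r m ^ (K - j) = r m ^ (K - j - D) * r m ^ D := by
    rw [← pow_add]
    congr 1
    omega
  rw [hr m hm, hsplit]
  ring

theorem sum_Icc_choose_mul_sum_pow_sub_sum_Icc_choose_mul_sum_pow
    (hr : ∀ m ∈ S, (1 + r m) ^ D = N * r m ^ D) {K : ℕ} (hDK : D ≤ K) :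
    ∑ t ∈ Icc 1 K, (K.choose t : R) * ∑ m ∈ S, c m * r m ^ (K - t)
      - ∑ t ∈ Icc 1 (K - D), ((K - D).choose t : R) * ∑ m ∈ S, c m * r m ^ (K - t)
      = ∑ m ∈ S, c m * (N - 1) * r m ^ D * (1 + r m) ^ (K - D) := by
  rw [sum_Icc_choose_mul_sum_pow_sub _ _ _ le_rfl,
    sum_Icc_choose_mul_sum_pow_sub _ _ _ (Nat.sub_le K D), ← sum_sub_distrib]
  refine sum_congr rfl fun m hm => ?_
  have hsplit : ∀ x : R, x ^ K = x ^ D * x ^ (K - D) := fun x => by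
    rw [← pow_add]
    congr 1
    omega
  rw [Nat.sub_self, Nat.sub_sub_self hDK, hsplit (1 + r m), hsplit (r m), hr m hm]
  ring

end ExponentialSums

theorem eq_on_Icc_of_backward_recurrence {R : Type*} [Semiring R] {K D : ℕ} (c : R)
    (a : ℕ → R) {f g : ℕ → R}
    (hf : ∀ j ∈ Icc 1 (K - D), f j = c * ∑ i ∈ Icc 1 D, a i * f (i + j))
    (hg : ∀ j ∈ Icc 1 (K - D), g j = c * ∑ i ∈ Icc 1 D, a i * g (i + j))
    (hfg : ∀ j ∈ Icc (K - D + 1) K, f j = g j) :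
    ∀ j ∈ Icc 1 K, f j = g j := by
  intro j hj
  induction hn : K - j using Nat.strong_induction_on generalizing j with
  | _ n ih =>
  rw [mem_Icc] at hj
  by_cases hjD : K - D + 1 ≤ j
  · exact hfg j (mem_Icc.2 ⟨hjD, hj.2⟩)
  have hjD' : j ∈ Icc 1 (K - D) := mem_Icc.2 ⟨hj.1, by omega⟩
  rw [hf j hjD', hg j hjD']
  congr 1
  refine sum_congr rfl fun i hi => ?_
  rw [mem_Icc] at hi
  rw [ih (K - (i + j)) (by omega) (i + j) (mem_Icc.2 ⟨by omega, by omega⟩) rfl]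

theorem eq_sum_mul_pow_of_backward_recurrence {F ι : Type*} [Field F] {S : Finset ι}
    {c r : ι → F} {N A : F} {D K : ℕ} {L : ℕ → F} (hN : N - 1 ≠ 0)
    (hr : ∀ m ∈ S, (1 + r m) ^ D = N * r m ^ D)
    (hcr : ∀ p < D, ∑ m ∈ S, c m * r m ^ p = A * 0 ^ p)
    (hLK : L K = A) (hzero : ∀ j ∈ Icc (K - D + 1) (K - 1), L j = 0)
    (hrec : ∀ j ∈ Icc 1 (K - D),
      L j = 1 / (N - 1) * ∑ i ∈ Icc 1 D, (D.choose i : F) * L (i + j)) :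
    ∀ j ∈ Icc 1 K, L j = ∑ m ∈ S, c m * r m ^ (K - j) := by
  refine eq_on_Icc_of_backward_recurrence _ _ hrec (fun j hj => ?_) (fun j hj => ?_)
  · rw [mem_Icc] at hj
    rw [eq_comm, one_div, inv_mul_eq_iff_eq_mul₀ hN,
      sub_one_mul_sum_mul_pow_eq_sum_Icc_choose hr (by omega)]
  · rw [mem_Icc] at hj
    rw [hcr (K - j) (by omega)]
    rcases eq_or_lt_of_le hj.2 with rfl | hjK
    · rw [hLK, Nat.sub_self, pow_zero, mul_one]
    · rw [hzero j (mem_Icc.2 ⟨hj.1, by omega⟩), zero_pow (by omega), mul_zero]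

theorem one_add_one_div_sub_one_pow {F : Type*} [Field F] {u : F} (hu : u ≠ 1) (n : ℕ) :
    (1 + 1 / (u - 1)) ^ n = u ^ n * (1 / (u - 1)) ^ n := by
  rw [← mul_pow]
  congr 1
  field_simp [sub_ne_zero.2 hu]
  ring

namespace IsPrimitiveRoot

open Polynomial

variable {F : Type*} [Field F] {ζ : F} {D : ℕ}

theorem pow_mul_pow_eq_pow (hζ : IsPrimitiveRoot ζ D) (m : ℕ) (σ : F) :
    (ζ ^ m * σ) ^ D = σ ^ D := by
  rw [mul_pow, ← pow_mul, mul_comm m, pow_mul, hζ.pow_eq_one, one_pow, one_mul]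

theorem sum_pow_pow_eq_zero (hζ : IsPrimitiveRoot ζ D) {k : ℕ} (hk0 : k ≠ 0) (hkD : k < D) :
    ∑ m ∈ range D, (ζ ^ k) ^ m = 0 := by
  refine eq_zero_of_ne_zero_of_mul_left_eq_zero
    (sub_ne_zero_of_ne (hζ.pow_ne_one_of_pos_of_lt hk0 hkD).symm) ?_
  rw [mul_neg_geom_sum, ← pow_mul, mul_comm, pow_mul, hζ.pow_eq_one, one_pow, sub_self]

theorem sum_eval_pow_mul (hζ : IsPrimitiveRoot ζ D) {P : F[X]} (hP : P.natDegree < D) (x : F) :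
    ∑ m ∈ range D, P.eval (ζ ^ m * x) = D * P.coeff 0 := by
  simp_rw [eval_eq_sum_range' hP]
  rw [sum_comm, sum_eq_single_of_mem 0 (mem_range.2 (by omega))]
  · simp [mul_comm]
  · intro k hkD hk
    have hswap : ∀ m, P.coeff k * (ζ ^ m * x) ^ k = P.coeff k * x ^ k * (ζ ^ k) ^ m :=
      fun m => by ring
    rw [sum_congr rfl fun m _ => hswap m, ← mul_sum, hζ.sum_pow_pow_eq_zero hk (mem_range.1 hkD),
      mul_zero]

/-- With `w = (ζ ^ m σ)⁻¹`, the summand is `A / D * (1 - w) ^ (D - 1 - p) * w ^ p`, a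
polynomial in `w` of degree `D - 1` with constant term `A / D * 0 ^ p`, and the `w` run over
`ζ⁻¹ ^ m σ⁻¹`. -/
theorem sum_div_mul_sub_one_pow_div_pow_mul_inv_pow [CharZero F] (hζ : IsPrimitiveRoot ζ D)
    (A : F) {σ : F} (hσ0 : σ ≠ 0) (hσ1 : σ ^ D ≠ 1) {p : ℕ} (hp : p < D) :
    ∑ m ∈ range D,
        A / D * (ζ ^ m * σ - 1) ^ (D - 1) / (ζ ^ m * σ) ^ (D - 1) * (1 / (ζ ^ m * σ - 1)) ^ p
      = A * 0 ^ p := by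
  set P : F[X] := (1 - X) ^ (D - 1 - p) * X ^ p
  have hterm : ∀ m,
      A / D * (ζ ^ m * σ - 1) ^ (D - 1) / (ζ ^ m * σ) ^ (D - 1) * (1 / (ζ ^ m * σ - 1)) ^ p
        = A / D * P.eval (ζ⁻¹ ^ m * σ⁻¹) := by
    intro m
    have hu0 : ζ ^ m * σ ≠ 0 := mul_ne_zero (pow_ne_zero _ (hζ.ne_zero (by omega))) hσ0
    have hu1 : ζ ^ m * σ - 1 ≠ 0 :=
      sub_ne_zero.2 fun h => hσ1 (by rw [← hζ.pow_mul_pow_eq_pow m, h, one_pow])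
    have hq : D - 1 = D - 1 - p + p := by omega
    rw [inv_pow, ← mul_inv]
    simp only [P, eval_mul, eval_pow, eval_sub, eval_one, eval_X]
    generalize ζ ^ m * σ = u at hu0 hu1 ⊢
    generalize D - 1 - p = q at hq ⊢
    have hw : 1 - u⁻¹ = (u - 1) / u := by field_simp
    rw [hw, hq, pow_add, pow_add]
    simp only [div_pow, inv_pow, one_pow]
    field_simp
  have hdeg : P.natDegree < D := by
    have : P.natDegree ≤ D - 1 - p + p := by
      unfold P
      compute_degree
    omega
  rw [sum_congr rfl fun m _ => hterm m, ← mul_sum, hζ.inv.sum_eval_pow_mul hdeg,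
    coeff_zero_eq_eval_zero]
  have hD : (D : F) ≠ 0 := Nat.cast_ne_zero.2 (by omega)
  simp only [P, eval_mul, eval_pow, eval_sub, eval_one, eval_X, sub_zero, one_pow, one_mul]
  field_simp

end IsPrimitiveRoot

theorem stmt_8_general (K D N : ℕ) (hD : 1 < D) (hK : D < K) (hN : 1 < N)
    (L : ℕ → ℂ)
    (hLK : L K = ((N : ℂ) - 1) ^ (K - D))
    (hzero : ∀ j ∈ Finset.Icc (K - D + 1) (K - 1), L j = 0)
    (hrec : ∀ j ∈ Finset.Icc 1 (K - D),
      L j = (1 / ((N : ℂ) - 1)) * ∑ i ∈ Finset.Icc 1 D, (D.choose i : ℂ) * L (i + j))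
    (s : ℝ) (hsD : s ^ D = (N : ℝ))
    (u r c : ℕ → ℂ)
    (hu : ∀ m, u m = Complex.exp (2 * Real.pi * Complex.I * m / D) * (s : ℂ))
    (hr : ∀ m, r m = 1 / (u m - 1))
    (hc : ∀ m, c m = (((N : ℂ) - 1) ^ (K - D) / D) * (u m - 1) ^ (D - 1) / (u m) ^ (D - 1)) :
    ((N : ℂ) / D) * (∑ t ∈ Finset.Icc 1 K, (K.choose t : ℂ) * L t)
      - ((N : ℂ) / D) * (∑ t ∈ Finset.Icc 1 (K - D), ((K - D).choose t : ℂ) * L t)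
    = ((N : ℂ) / D) * ∑ m ∈ Finset.range D,
        c m * ((N : ℂ) - 1) * (r m) ^ D * (1 + r m) ^ (K - D) := by
  set ζ := exp (2 * Real.pi * I / D)
  have hζ : IsPrimitiveRoot ζ D := isPrimitiveRoot_exp D (by omega)
  have hN1 : (N : ℂ) - 1 ≠ 0 := sub_ne_zero.2 (by exact_mod_cast hN.ne')
  have hsN : (s : ℂ) ^ D = N := by exact_mod_cast hsD
  have hs0 : (s : ℂ) ≠ 0 :=
    ne_zero_pow (by omega : D ≠ 0) (by rw [hsN]; exact_mod_cast (by omega : N ≠ 0))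
  have hu' : ∀ m, u m = ζ ^ m * s := fun m => by
    rw [hu, ← exp_nat_mul]
    congr 2
    ring
  have hu1 : ∀ m, u m ≠ 1 := fun m h => hN1 <| by
    rw [← hsN, ← hζ.pow_mul_pow_eq_pow m, ← hu', h, one_pow, sub_self]
  have hpow : ∀ m ∈ range D, (1 + r m) ^ D = N * r m ^ D := fun m _ => by
    rw [hr, one_add_one_div_sub_one_pow (hu1 m), hu', hζ.pow_mul_pow_eq_pow, hsN]
  have hs1 : (s : ℂ) ^ D ≠ 1 := by rw [hsN]; exact_mod_cast hN.ne'
  have hS : ∀ p < D, ∑ m ∈ range D, c m * r m ^ p = ((N : ℂ) - 1) ^ (K - D) * 0 ^ p := by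
    intro p hp
    simp_rw [hc, hr, hu']
    exact hζ.sum_div_mul_sub_one_pow_div_pow_mul_inv_pow _ hs0 hs1 hp
  have hL := eq_sum_mul_pow_of_backward_recurrence hN1 hpow hS hLK hzero hrec
  have hLsum : ∀ n ≤ K, ∑ t ∈ Icc 1 n, (n.choose t : ℂ) * L t
      = ∑ t ∈ Icc 1 n, (n.choose t : ℂ) * ∑ m ∈ range D, c m * r m ^ (K - t) :=
    fun n hn => sum_congr rfl fun t ht => by rw [hL t (Icc_subset_Icc_right hn ht)]
  rw [← mul_sub, hLsum K le_rfl, hLsum (K - D) (Nat.sub_le K D),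
    sum_Icc_choose_mul_sum_pow_sub_sum_Icc_choose_mul_sum_pow hpow hK.le]

/-- The quantity `L` satisfies
`L = (N/D) · Σ_{m=0}^{D-1} c_m · (N-1) · r_m^D · (1 + r_m)^{K-D}`. -/
theorem stmt_8 (K D N : ℕ) (hD : 1 < D) (hK : D < K) (hN : 1 < N)
    (L : ℕ → ℂ)
    (hLK : L K = ((N : ℂ) - 1) ^ (K - D))
    (hzero : ∀ j ∈ Finset.Icc (K - D + 1) (K - 1), L j = 0)
    (hrec : ∀ j ∈ Finset.Icc 1 (K - D),
      L j = (1 / ((N : ℂ) - 1)) * ∑ i ∈ Finset.Icc 1 D, (D.choose i : ℂ) * L (i + j))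
    (s : ℝ) (hs : 0 < s) (hsD : s ^ D = (N : ℝ))
    (u r c : ℕ → ℂ)
    (hu : ∀ m, u m = Complex.exp (2 * Real.pi * Complex.I * m / D) * (s : ℂ))
    (hr : ∀ m, r m = 1 / (u m - 1))
    (hc : ∀ m, c m = (((N : ℂ) - 1) ^ (K - D) / D) * (u m - 1) ^ (D - 1) / (u m) ^ (D - 1)) :
    ((N : ℂ) / D) * (∑ t ∈ Finset.Icc 1 K, (K.choose t : ℂ) * L t)
      - ((N : ℂ) / D) * (∑ t ∈ Finset.Icc 1 (K - D), ((K - D).choose t : ℂ) * L t)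
    = ((N : ℂ) / D) * ∑ m ∈ Finset.range D,
        c m * ((N : ℂ) - 1) * (r m) ^ D * (1 + r m) ^ (K - D) :=
  stmt_8_general K D N hD hK hN L hLK hzero hrec s hsD u r c hu hr hc
end

section
/- The quantity L satisfies L = ((N−1)^T / D²) · Σ_{m=0}^{D−1} (1 − ω_m · s^{−1})^{−T}, where T = K−D+1. -/
/-!
The recurrence is linear with characteristic equation `(1 + μ) ^ D = N`, whose roots are
`μ_m = s ζ ^ m - 1` for a primitive `D`-th root of unity `ζ`. Its solution is determined by the
`D` boundary values on `[K - D + 1, K]`, and the orthogonality relation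
`∑ m, ζ ^ m (s ζ ^ m - 1) ^ r = D s ^ (D - 1) [r = D - 1]` for `r < D` shows that
`L j = ∑ m, c_m μ_m ^ j` with `c_m = (N - 1) ^ (K - D) ζ ^ m / (D s ^ (D - 1) μ_m ^ (K - D + 1))`.
The binomial sums then collapse via `∑ t, C(M, t) μ ^ t = (1 + μ) ^ M - 1`, and
`(1 + μ_m) ^ K - (1 + μ_m) ^ (K - D) = (N - 1) (s ζ ^ m) ^ (K - D)`; taking `ζ = ω_1⁻¹` gives
the stated sum.
-/

open Finset Complex

theorem sum_Icc_choose_mul_pow {R : Type*} [CommRing R] (x : R) (n : ℕ) :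
    ∑ i ∈ Icc 1 n, (n.choose i : R) * x ^ i = (x + 1) ^ n - 1 := by
  rw [add_pow, sum_range_succ', ← Ico_add_one_right_eq_Icc, sum_Ico_eq_sum_range]
  simp [add_comm 1, mul_comm]

theorem IsPrimitiveRoot.sum_pow_pow {F : Type*} [Field F] {ζ : F} {D : ℕ}
    (hζ : IsPrimitiveRoot ζ D) (k : ℕ) :
    ∑ m ∈ range D, (ζ ^ m) ^ k = if D ∣ k then (D : F) else 0 := by
  simp_rw [← pow_mul, mul_comm _ k, pow_mul]
  split_ifs with h
  · simp [(hζ.pow_eq_one_iff_dvd k).2 h]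
  · rw [geom_sum_eq (mt (hζ.pow_eq_one_iff_dvd k).1 h), ← pow_mul, mul_comm, pow_mul,
      hζ.pow_eq_one, one_pow, sub_self, zero_div]

theorem IsPrimitiveRoot.sum_pow_mul_mul_sub_one_pow {F : Type*} [Field F] {ζ : F} {D : ℕ}
    (hζ : IsPrimitiveRoot ζ D) (s : F) {r : ℕ} (hr : r < D) :
    ∑ m ∈ range D, ζ ^ m * (s * ζ ^ m - 1) ^ r = if r = D - 1 then D * s ^ (D - 1) else 0 := by
  have hexpand : ∀ m, ζ ^ m * (s * ζ ^ m - 1) ^ r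
      = ∑ j ∈ range (r + 1), (s ^ j * (-1) ^ (r - j) * r.choose j) * (ζ ^ m) ^ (j + 1) := by
    intro m
    rw [sub_eq_add_neg, add_pow, mul_sum]
    refine sum_congr rfl fun j _ => ?_
    ring
  have hroot : ∀ j ∈ range (r + 1),
      (if D ∣ j + 1 then (D : F) else 0) = if j = D - 1 then (D : F) else 0 := by
    intro j hj
    have : D ∣ j + 1 ↔ j = D - 1 := by
      rw [mem_range] at hj
      constructor
      · intro h; have := Nat.le_of_dvd (by omega) h; omega
      · intro h; rw [h, Nat.sub_add_cancel (by omega)]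
    simp only [this]
  simp_rw [hexpand]
  rw [sum_comm]
  simp_rw [← mul_sum, hζ.sum_pow_pow]
  rw [sum_congr rfl fun j hj => by rw [hroot j hj]]
  simp only [mul_ite, mul_zero, sum_ite_eq', mem_range]
  rcases eq_or_ne r (D - 1) with rfl | hr'
  · simp only [lt_add_one, if_true, Nat.sub_self, pow_zero, Nat.choose_self, Nat.cast_one]
    ring
  · rw [if_neg (by omega), if_neg hr']

theorem forall_mem_Icc_of_backward_step {K D : ℕ} {P : ℕ → Prop}
    (htop : ∀ j ∈ Icc (K - D + 1) K, P j)
    (hstep : ∀ j ∈ Icc 1 (K - D), (∀ i ∈ Icc 1 D, P (i + j)) → P j) :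
    ∀ j ∈ Icc 1 K, P j := by
  intro j hj
  induction hn : K - j using Nat.strong_induction_on generalizing j with
  | _ n ih =>
    rw [mem_Icc] at hj
    by_cases hjD : K - D + 1 ≤ j
    · exact htop j (mem_Icc.2 ⟨hjD, hj.2⟩)
    · refine hstep j (mem_Icc.2 ⟨hj.1, by omega⟩) fun i hi => ?_
      rw [mem_Icc] at hi
      exact ih (K - (i + j)) (by omega) (i + j) (mem_Icc.2 ⟨by omega, by omega⟩) rfl

theorem sum_Icc_choose_mul_sum_mul_pow {R ι : Type*} [CommRing R] (S : Finset ι) (c μ : ι → R)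
    (M : ℕ) :
    ∑ t ∈ Icc 1 M, (M.choose t : R) * ∑ m ∈ S, c m * μ m ^ t
      = ∑ m ∈ S, c m * ((μ m + 1) ^ M - 1) := by
  simp_rw [mul_sum]
  rw [sum_comm]
  refine sum_congr rfl fun m _ => ?_
  rw [← sum_Icc_choose_mul_pow, mul_sum]
  refine sum_congr rfl fun t _ => ?_
  ring

theorem mul_pow_pow_of_pow_eq_one {M : Type*} [CommMonoid M] {ζ : M} {D : ℕ} (hζ : ζ ^ D = 1)
    (s : M) (m : ℕ) : (s * ζ ^ m) ^ D = s ^ D := by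
  rw [mul_pow, ← pow_mul, mul_comm m, pow_mul, hζ, one_pow, mul_one]

section RootCoeff

variable {F : Type*} [Field F] {ζ s N : F} {D K : ℕ}

theorem mul_pow_sub_one_ne_zero (hζ : ζ ^ D = 1) (hs : s ^ D ≠ 1) (m : ℕ) :
    s * ζ ^ m - 1 ≠ 0 := by
  rw [sub_ne_zero]
  rintro h
  exact hs (by rw [← mul_pow_pow_of_pow_eq_one hζ s m, h, one_pow])

def rootCoeff (ζ s : F) (D K m : ℕ) : F :=
  (s ^ D - 1) ^ (K - D) * ζ ^ m / (D * s ^ (D - 1) * (s * ζ ^ m - 1) ^ (K - D + 1))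

theorem sum_rootCoeff_mul_pow_of_mem_Icc (hζ : IsPrimitiveRoot ζ D) (hs : s ≠ 0)
    (hN1 : s ^ D ≠ 1) (hDK : D ≤ K) {j : ℕ} (hj : j ∈ Icc (K - D + 1) K) :
    ∑ m ∈ range D, rootCoeff ζ s D K m * (s * ζ ^ m - 1) ^ j
      = if j = K then (s ^ D - 1) ^ (K - D) else 0 := by
  have : NeZero D := ⟨by rintro rfl; exact hN1 (pow_zero s)⟩
  have hD : (D : F) ≠ 0 := hζ.neZero'.out
  rw [mem_Icc] at hj
  obtain ⟨r, rfl⟩ : ∃ r, j = K - D + 1 + r := ⟨j - (K - D + 1), by omega⟩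
  have hterm : ∀ m, rootCoeff ζ s D K m * (s * ζ ^ m - 1) ^ (K - D + 1 + r)
      = (s ^ D - 1) ^ (K - D) / (D * s ^ (D - 1)) * (ζ ^ m * (s * ζ ^ m - 1) ^ r) := by
    intro m
    have := mul_pow_sub_one_ne_zero hζ.pow_eq_one hN1 m
    rw [rootCoeff]
    generalize s * ζ ^ m - 1 = μ at this ⊢
    field_simp
    ring
  simp_rw [hterm]
  rw [← mul_sum, hζ.sum_pow_mul_mul_sub_one_pow s (by omega)]
  rcases eq_or_ne r (D - 1) with rfl | hr
  · rw [if_pos rfl, if_pos (by omega)]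
    field_simp
  · rw [if_neg hr, if_neg (by omega), mul_zero]

theorem eq_sum_rootCoeff_mul_pow (hζ : IsPrimitiveRoot ζ D) (hs : s ≠ 0) (hsN : s ^ D = N)
    (hN1 : N ≠ 1) (hDK : D ≤ K) {L : ℕ → F} (hLK : L K = (N - 1) ^ (K - D))
    (hzero : ∀ j ∈ Icc (K - D + 1) (K - 1), L j = 0)
    (hrec : ∀ j ∈ Icc 1 (K - D),
      L j = (1 / (N - 1)) * ∑ i ∈ Icc 1 D, (D.choose i : F) * L (i + j)) :
    ∀ j ∈ Icc 1 K, L j = ∑ m ∈ range D, rootCoeff ζ s D K m * (s * ζ ^ m - 1) ^ j := by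
  subst hsN
  refine forall_mem_Icc_of_backward_step (D := D) (fun j hj => ?_) (fun j hj hstep => ?_)
  · rw [sum_rootCoeff_mul_pow_of_mem_Icc hζ hs hN1 hDK hj]
    rcases eq_or_ne j K with rfl | hjK
    · rw [if_pos rfl, hLK]
    · rw [if_neg hjK, hzero j (by simp only [mem_Icc] at hj ⊢; omega)]
  · have hrecurrence : ∑ i ∈ Icc 1 D, (D.choose i : F) *
          ∑ m ∈ range D, rootCoeff ζ s D K m * (s * ζ ^ m - 1) ^ (i + j)
        = (s ^ D - 1) * ∑ m ∈ range D, rootCoeff ζ s D K m * (s * ζ ^ m - 1) ^ j := by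
      have hshift : ∀ i m, rootCoeff ζ s D K m * (s * ζ ^ m - 1) ^ (i + j)
          = rootCoeff ζ s D K m * (s * ζ ^ m - 1) ^ j * (s * ζ ^ m - 1) ^ i := fun i m => by ring
      simp_rw [hshift]
      rw [sum_Icc_choose_mul_sum_mul_pow, mul_sum]
      refine sum_congr rfl fun m _ => ?_
      rw [sub_add_cancel, mul_pow_pow_of_pow_eq_one hζ.pow_eq_one]
      ring
    rw [hrec j hj, sum_congr rfl fun i hi => by rw [hstep i hi], hrecurrence, one_div,
      inv_mul_cancel_left₀ (sub_ne_zero.2 hN1)]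

theorem sum_choose_mul_sub_sum_choose_mul_eq (hζ : IsPrimitiveRoot ζ D) (hs : s ≠ 0)
    (hsN : s ^ D = N) (hN1 : N ≠ 1) (hDK : D ≤ K) {L : ℕ → F} (hLK : L K = (N - 1) ^ (K - D))
    (hzero : ∀ j ∈ Icc (K - D + 1) (K - 1), L j = 0)
    (hrec : ∀ j ∈ Icc 1 (K - D),
      L j = (1 / (N - 1)) * ∑ i ∈ Icc 1 D, (D.choose i : F) * L (i + j)) :
    (N / D) * (∑ t ∈ Icc 1 K, (K.choose t : F) * L t)
      - (N / D) * (∑ t ∈ Icc 1 (K - D), ((K - D).choose t : F) * L t)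
    = ((N - 1) ^ (K - D + 1) / (D : F) ^ 2) *
        ∑ m ∈ range D, (1 - (ζ ^ m)⁻¹ * s⁻¹) ^ (-((K : ℤ) - D + 1)) := by
  have hL := eq_sum_rootCoeff_mul_pow hζ hs hsN hN1 hDK hLK hzero hrec
  have hsum : ∀ M ≤ K, ∑ t ∈ Icc 1 M, (M.choose t : F) * L t
      = ∑ m ∈ range D, rootCoeff ζ s D K m * ((s * ζ ^ m - 1 + 1) ^ M - 1) := by
    intro M hM
    rw [← sum_Icc_choose_mul_sum_mul_pow]
    refine sum_congr rfl fun t ht => ?_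
    rw [hL t (by simp only [mem_Icc] at ht ⊢; omega)]
  have hexp : -((K : ℤ) - D + 1) = -((K - D + 1 : ℕ) : ℤ) := by omega
  rw [hsum K le_rfl, hsum (K - D) (Nat.sub_le K D), mul_sum, mul_sum, ← sum_sub_distrib, hexp,
    mul_sum]
  refine sum_congr rfl fun m _ => ?_
  subst hsN
  have : NeZero D := ⟨by rintro rfl; exact hN1 (pow_zero s)⟩
  have hD : (D : F) ≠ 0 := hζ.neZero'.out
  have hζm : ζ ^ m ≠ 0 := pow_ne_zero m (hζ.ne_zero (NeZero.ne D))
  have hμ := mul_pow_sub_one_ne_zero hζ.pow_eq_one hN1 m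
  have hpowK : (s * ζ ^ m) ^ K = (s * ζ ^ m) ^ (K - D) * s ^ D := by
    rw [← mul_pow_pow_of_pow_eq_one hζ.pow_eq_one s m, ← pow_add, Nat.sub_add_cancel hDK]
  have hsD : s ^ D = s * s ^ (D - 1) := by rw [← pow_succ', Nat.sub_add_cancel NeZero.one_le]
  have hbase : 1 - (ζ ^ m)⁻¹ * s⁻¹ = (s * ζ ^ m - 1) / (s * ζ ^ m) := by field_simp
  rw [sub_add_cancel, hpowK, zpow_neg, zpow_natCast, hbase, div_pow, inv_div, rootCoeff]
  generalize s * ζ ^ m - 1 = μ at hμ ⊢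
  rw [hsD]
  field_simp
  ring

end RootCoeff

/-- The quantity `L` satisfies
`L = ((N-1)^T / D²) · Σ_{m=0}^{D-1} (1 - ω_m · s⁻¹)^{-T}`, where `T = K - D + 1`. -/
theorem stmt_10 (K D N : ℕ) (hD : 1 < D) (hK : D < K) (hN : 1 < N)
    (L : ℕ → ℂ)
    (hLK : L K = ((N : ℂ) - 1) ^ (K - D))
    (hzero : ∀ j ∈ Finset.Icc (K - D + 1) (K - 1), L j = 0)
    (hrec : ∀ j ∈ Finset.Icc 1 (K - D),
      L j = (1 / ((N : ℂ) - 1)) * ∑ i ∈ Finset.Icc 1 D, (D.choose i : ℂ) * L (i + j))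
    (s : ℝ) (hs : 0 < s) (hsD : s ^ D = (N : ℝ))
    (ω : ℕ → ℂ)
    (hω : ∀ m, ω m = Complex.exp (2 * Real.pi * Complex.I * m / D)) :
    ((N : ℂ) / D) * (∑ t ∈ Finset.Icc 1 K, (K.choose t : ℂ) * L t)
      - ((N : ℂ) / D) * (∑ t ∈ Finset.Icc 1 (K - D), ((K - D).choose t : ℂ) * L t)
    = (((N : ℂ) - 1) ^ (K - D + 1) / (D : ℂ) ^ 2) *
        ∑ m ∈ Finset.range D, (1 - ω m * (s : ℂ)⁻¹) ^ (-((K : ℤ) - D + 1)) := by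
  set ζ : ℂ := (exp (2 * Real.pi * I / D))⁻¹
  have hζ : IsPrimitiveRoot ζ D := (isPrimitiveRoot_exp D (by omega)).inv
  have hωζ : ∀ m, ω m = (ζ ^ m)⁻¹ := fun m => by
    rw [hω, inv_pow, inv_inv, ← exp_nat_mul]
    ring_nf
  have hsN : (s : ℂ) ^ D = N := by exact_mod_cast hsD
  have hN1 : (N : ℂ) ≠ 1 := by exact_mod_cast hN.ne'
  simp_rw [hωζ]
  exact sum_choose_mul_sub_sum_choose_mul_eq hζ (by exact_mod_cast hs.ne') hsN hN1 hK.le hLK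
    hzero hrec
end

section
/- It holds that (1/D) · Σ_{m=0}^{D−1} (1 − N^{−1})^T / (1 − ω_m · s^{−1})^T = Σ_{k=0}^{S} a_{kD} · N^{−k}, where T = K−D+1 and S = ⌊T(D−1)/D⌋. -/
/-!
Put `P = (1 + X + ⋯ + X^{D-1})^T`. Every `z = ζ^m s⁻¹`, with `ζ = exp (2πi/D)`, satisfies
`z^D = N⁻¹ ≠ 1`, so `1 - N⁻¹ = (1 - z)(1 + z + ⋯ + z^{D-1})` turns the `m`-th summand into `P(z)`.
Averaging `P` over the `D` rotations `ζ^m x` keeps exactly the monomials whose degree is divisible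
by `D` (roots-of-unity filter), and `x^{kD} = N^{-k}` for `x = s⁻¹`.
-/

open Finset Complex Polynomial

theorem Finset.sum_range_ite_dvd {M : Type*} [AddCommMonoid M] {D : ℕ} (hD : 0 < D) (n : ℕ)
    (f : ℕ → M) :
    ∑ j ∈ range (n + 1), (if D ∣ j then f j else 0) = ∑ k ∈ range (n / D + 1), f (k * D) := by
  rw [← sum_filter]
  refine sum_nbij' (· / D) (· * D) (fun j hj => ?_) (fun k hk => ?_) (fun j hj => ?_)
    (fun k _ => Nat.mul_div_cancel k hD) (fun j hj => ?_)
  · simp only [mem_filter, mem_range] at hj ⊢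
    exact Nat.lt_succ_of_le (Nat.div_le_div_right (Nat.lt_succ_iff.mp hj.1))
  · simp only [mem_filter, mem_range] at hk ⊢
    refine ⟨?_, dvd_mul_left D k⟩
    have := Nat.div_mul_le_self n D
    have := Nat.mul_le_mul_right D (Nat.lt_succ_iff.mp hk)
    omega
  · exact Nat.div_mul_cancel (mem_filter.mp hj).2
  · rw [Nat.div_mul_cancel (mem_filter.mp hj).2]

theorem IsPrimitiveRoot.sum_pow_pow_eq_ite {R : Type*} [CommRing R] [IsDomain R] {ζ : R} {D : ℕ}
    (hζ : IsPrimitiveRoot ζ D) (j : ℕ) :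
    ∑ m ∈ range D, (ζ ^ m) ^ j = if D ∣ j then (D : R) else 0 := by
  simp_rw [← pow_mul, mul_comm _ j, pow_mul]
  split_ifs with hj
  · simp [(hζ.pow_eq_one_iff_dvd j).mpr hj]
  · have hζj : ζ ^ j ≠ 1 := fun h => hj ((hζ.pow_eq_one_iff_dvd j).mp h)
    have : (ζ ^ j - 1) * ∑ m ∈ range D, (ζ ^ j) ^ m = 0 := by
      rw [mul_geom_sum, ← pow_mul, mul_comm, pow_mul, hζ.pow_eq_one, one_pow, sub_self]
    exact (mul_eq_zero.mp this).resolve_left (sub_ne_zero.mpr hζj)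

theorem IsPrimitiveRoot.sum_eval_mul {R : Type*} [CommRing R] [IsDomain R] {ζ : R} {D : ℕ}
    (hζ : IsPrimitiveRoot ζ D) (hD : 0 < D) {p : R[X]} {n : ℕ} (hp : p.natDegree ≤ n) (x : R) :
    ∑ m ∈ range D, p.eval (ζ ^ m * x) =
      D * ∑ k ∈ range (n / D + 1), p.coeff (k * D) * (x ^ D) ^ k := by
  calc ∑ m ∈ range D, p.eval (ζ ^ m * x)
      = ∑ j ∈ range (n + 1), p.coeff j * x ^ j * ∑ m ∈ range D, (ζ ^ m) ^ j := by
        simp_rw [eval_eq_sum_range' (Nat.lt_succ_of_le hp)]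
        rw [sum_comm]
        refine sum_congr rfl fun j _ => ?_
        rw [mul_sum]
        exact sum_congr rfl fun m _ => by ring
    _ = ∑ j ∈ range (n + 1), if D ∣ j then D * (p.coeff j * x ^ j) else 0 := by
        refine sum_congr rfl fun j _ => ?_
        rw [hζ.sum_pow_pow_eq_ite]
        split_ifs <;> ring
    _ = _ := by simp_rw [sum_range_ite_dvd hD, mul_sum, pow_mul']

theorem eval_geom_sum_X_pow {K : Type*} [Field K] {z : K} (hz : z ≠ 1) (D T : ℕ) :
    ((∑ i ∈ range D, (X : K[X]) ^ i) ^ T).eval z = (1 - z ^ D) ^ T / (1 - z) ^ T := by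
  rw [eq_div_iff (pow_ne_zero _ (sub_ne_zero.mpr hz.symm)), eval_pow, ← mul_pow, eval_geom_sum,
    geom_sum_mul_neg]

theorem natDegree_geom_sum_X_pow_le {R : Type*} [CommRing R] (D T : ℕ) :
    ((∑ i ∈ range D, (X : R[X]) ^ i) ^ T).natDegree ≤ T * (D - 1) :=
  natDegree_pow_le_of_le T <| natDegree_sum_le_of_forall_le _ _ fun i hi =>
    (natDegree_X_pow_le i).trans (Nat.le_sub_one_of_lt (mem_range.mp hi))

theorem stmt_12_general (K D N : ℕ) (hD : 1 < D) (hN : 1 < N)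
    (s : ℝ) (hsD : s ^ D = (N : ℝ))
    (ω : ℕ → ℂ)
    (hω : ∀ m, ω m = Complex.exp (2 * Real.pi * Complex.I * m / D)) :
    (1 / (D : ℂ)) * ∑ m ∈ Finset.range D,
        (1 - (N : ℂ)⁻¹) ^ (K - D + 1) / (1 - ω m * (s : ℂ)⁻¹) ^ (K - D + 1)
    = ∑ k ∈ Finset.range ((K - D + 1) * (D - 1) / D + 1),
        (((∑ i ∈ Finset.range D, (Polynomial.X : ℂ[X]) ^ i) ^ (K - D + 1)).coeff (k * D))
          * ((N : ℂ) ^ k)⁻¹ := by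
  set T := K - D + 1
  set ζ := exp (2 * Real.pi * I / D)
  have hζ : IsPrimitiveRoot ζ D := isPrimitiveRoot_exp D (by omega)
  have hsN : (s : ℂ)⁻¹ ^ D = (N : ℂ)⁻¹ := by rw [inv_pow, ← ofReal_pow, hsD, ofReal_natCast]
  have hN1 : (N : ℂ)⁻¹ ≠ 1 := by
    rw [Ne, inv_eq_one]
    exact_mod_cast hN.ne'
  have hterm (m : ℕ) : (1 - (N : ℂ)⁻¹) ^ T / (1 - ω m * (s : ℂ)⁻¹) ^ T =
      ((∑ i ∈ range D, (X : ℂ[X]) ^ i) ^ T).eval (ζ ^ m * (s : ℂ)⁻¹) := by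
    have hω_eq : ω m = ζ ^ m := by rw [hω, ← exp_nat_mul]; ring_nf
    have hz : (ζ ^ m * (s : ℂ)⁻¹) ^ D = (N : ℂ)⁻¹ := by
      rw [mul_pow, ← pow_mul, mul_comm m, pow_mul, hζ.pow_eq_one, one_pow, one_mul, hsN]
    rw [eval_geom_sum_X_pow (fun h => hN1 (by rw [← hz, h, one_pow])), hz, hω_eq]
  rw [sum_congr rfl fun m _ => hterm m,
    hζ.sum_eval_mul (by omega) (natDegree_geom_sum_X_pow_le D T), hsN, ← mul_assoc,
    one_div_mul_cancel (by exact_mod_cast (by omega : D ≠ 0)), one_mul]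
  simp_rw [inv_pow]

/-- With `T = K - D + 1`, `S = ⌊T(D-1)/D⌋`, and `a_n` the coefficient of `x^n`
in `(1 + x + ⋯ + x^{D-1})^T`,
`(1/D) · Σ_{m=0}^{D-1} (1 - N⁻¹)^T / (1 - ω_m · s⁻¹)^T = Σ_{k=0}^{S} a_{kD} · N^{-k}`. -/
theorem stmt_12 (K D N : ℕ) (hD : 1 < D) (hK : D < K) (hN : 1 < N)
    (s : ℝ) (hs : 0 < s) (hsD : s ^ D = (N : ℝ))
    (ω : ℕ → ℂ)
    (hω : ∀ m, ω m = Complex.exp (2 * Real.pi * Complex.I * m / D)) :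
    (1 / (D : ℂ)) * ∑ m ∈ Finset.range D,
        (1 - (N : ℂ)⁻¹) ^ (K - D + 1) / (1 - ω m * (s : ℂ)⁻¹) ^ (K - D + 1)
    = ∑ k ∈ Finset.range ((K - D + 1) * (D - 1) / D + 1),
        (((∑ i ∈ Finset.range D, (Polynomial.X : ℂ[X]) ^ i) ^ (K - D + 1)).coeff (k * D))
          * ((N : ℂ) ^ k)⁻¹ :=
  stmt_12_general K D N hD hN s hsD ω hω
end
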